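/- Let $k < m$ be positive integers, $C_k, C_m > 0$, and $h^* = (C_k/C_m)^{1/(m-k)}$. Let $X$ be uniform on $[0, C_k h^k]$ and $Y$ uniform on $[0, C_m h^m]$, independent. Then $P(Y \le X) = 1 - \frac{1}{2}(h/h^*)^{m-k}$ if $0 < h \le h^*$, and $P(Y \le X) = \frac{1}{2}(h^*/h)^{m-k}$ if $h \ge h^*$. -/

import Mathlib

/-!
By independence the law of `(X, Y)` is the product of the two uniform laws on `[0, a]` and
`[0, b]`, with `a = C_k h^k` and `b = C_m h^m`, so by Fubini
`P(Y ≤ X) = (a b)⁻¹ ∫₀ᵃ min x b dx`, which is `1 - b / (2a)` when `b ≤ a` and `a / (2b)` when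
`a ≤ b`. Since `(h*)^(m-k) = C_k / C_m`, the ratio `b / a` equals `(h / h*)^(m-k)`, so `b ≤ a`
exactly when `h ≤ h*`.
-/

open MeasureTheory ProbabilityTheory Set

noncomputable abbrev uniformIcc (a : ℝ) : Measure ℝ :=
  (ENNReal.ofReal a)⁻¹ • volume.restrict (Icc 0 a)

lemma uniformIcc_univ {a : ℝ} (ha : 0 < a) : uniformIcc a univ = 1 := by
  simp [ENNReal.inv_mul_cancel, ha]

lemma uniformIcc_Iic (b x : ℝ) :
    uniformIcc b (Iic x) = (ENNReal.ofReal b)⁻¹ * ENNReal.ofReal (min x b) := by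
  have hinter : Iic x ∩ Icc 0 b = Icc 0 (min x b) := by
    ext y
    simp only [mem_inter_iff, mem_Iic, mem_Icc, le_min_iff]
    tauto
  rw [Measure.smul_apply, Measure.restrict_apply measurableSet_Iic, hinter, Real.volume_Icc,
    sub_zero, smul_eq_mul]

lemma integral_min_of_le {a b : ℝ} (ha : 0 ≤ a) (hab : a ≤ b) :
    ∫ x in (0 : ℝ)..a, min x b = a ^ 2 / 2 := by
  rw [intervalIntegral.integral_congr (g := fun x => x) fun x hx => min_eq_left ?_]
  · simp
  · exact ((uIcc_of_le ha ▸ hx).2).trans hab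

lemma integral_min_of_ge {a b : ℝ} (hb : 0 ≤ b) (hba : b ≤ a) :
    ∫ x in (0 : ℝ)..a, min x b = a * b - b ^ 2 / 2 := by
  have hint (c d : ℝ) : IntervalIntegrable (fun x => min x b) volume c d :=
    (by fun_prop : Continuous fun x : ℝ => min x b).intervalIntegrable c d
  rw [← intervalIntegral.integral_add_adjacent_intervals (hint 0 b) (hint b a),
    integral_min_of_le hb le_rfl,
    intervalIntegral.integral_congr (g := fun _ => b) fun x hx => min_eq_right ?_]
  · rw [intervalIntegral.integral_const, smul_eq_mul]
    ring
  · exact (uIcc_of_le hba ▸ hx).1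

lemma uniformIcc_prod_snd_le_fst {a b : ℝ} (ha : 0 < a) (hb : 0 < b) :
    (uniformIcc a).prod (uniformIcc b) {p | p.2 ≤ p.1}
      = ENNReal.ofReal ((∫ x in (0 : ℝ)..a, min x b) / (a * b)) := by
  have hmeas : MeasurableSet {p : ℝ × ℝ | p.2 ≤ p.1} :=
    (isClosed_le continuous_snd continuous_fst).measurableSet
  have hnonneg : 0 ≤ᵐ[volume.restrict (Icc 0 a)] fun x => min x b := by
    filter_upwards [ae_restrict_mem measurableSet_Icc] with x hx using le_min hx.1 hb.le
  have hslice (x : ℝ) : uniformIcc b (Prod.mk x ⁻¹' {p : ℝ × ℝ | p.2 ≤ p.1})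
      = (ENNReal.ofReal b)⁻¹ * ENNReal.ofReal (min x b) := uniformIcc_Iic b x
  rw [Measure.prod_apply hmeas, lintegral_smul_measure, lintegral_congr hslice,
    lintegral_const_mul' _ _ (by simp [hb]),
    ← ofReal_integral_eq_lintegral_ofReal
      (by fun_prop : Continuous fun x : ℝ => min x b).integrableOn_Icc hnonneg,
    integral_Icc_eq_integral_Ioc, ← intervalIntegral.integral_of_le ha.le,
    ENNReal.ofReal_div_of_pos (mul_pos ha hb), ENNReal.ofReal_mul ha.le, ENNReal.div_eq_inv_mul,
    ENNReal.mul_inv (by simp [ha]) (by simp), smul_eq_mul]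
  ring

section

variable {Ω : Type*} [MeasurableSpace Ω] {μ : Measure Ω} {X Y : Ω → ℝ} {a b : ℝ}

lemma aemeasurable_of_map_eq_uniformIcc (ha : 0 < a) (hX : μ.map X = uniformIcc a) :
    AEMeasurable X μ := by
  refine AEMeasurable.of_map_ne_zero fun h0 => ?_
  simpa [h0] using (congrArg (· univ) hX).trans (uniformIcc_univ ha)

lemma measure_le_of_indepFun_uniformIcc [IsFiniteMeasure μ] (ha : 0 < a) (hb : 0 < b)
    (hX : μ.map X = uniformIcc a) (hY : μ.map Y = uniformIcc b) (hXY : IndepFun X Y μ) :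
    μ {ω | Y ω ≤ X ω} = ENNReal.ofReal ((∫ x in (0 : ℝ)..a, min x b) / (a * b)) := by
  have hXm := aemeasurable_of_map_eq_uniformIcc ha hX
  have hYm := aemeasurable_of_map_eq_uniformIcc hb hY
  have hmeas : MeasurableSet {p : ℝ × ℝ | p.2 ≤ p.1} :=
    (isClosed_le continuous_snd continuous_fst).measurableSet
  rw [← uniformIcc_prod_snd_le_fst ha hb, ← hX, ← hY,
    ← hXY.map_prod_eq_prod_map_map hXm hYm,
    Measure.map_apply_of_aemeasurable (hXm.prodMk hYm) hmeas]
  rfl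

lemma measure_le_of_indepFun_uniformIcc_of_ge [IsFiniteMeasure μ] (ha : 0 < a) (hb : 0 < b)
    (hba : b ≤ a)
    (hX : μ.map X = uniformIcc a) (hY : μ.map Y = uniformIcc b) (hXY : IndepFun X Y μ) :
    μ {ω | Y ω ≤ X ω} = ENNReal.ofReal (1 - (1 / 2) * (b / a)) := by
  rw [measure_le_of_indepFun_uniformIcc ha hb hX hY hXY, integral_min_of_ge hb.le hba]
  congr 1
  field_simp

lemma measure_le_of_indepFun_uniformIcc_of_le [IsFiniteMeasure μ] (ha : 0 < a) (hb : 0 < b)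
    (hab : a ≤ b)
    (hX : μ.map X = uniformIcc a) (hY : μ.map Y = uniformIcc b) (hXY : IndepFun X Y μ) :
    μ {ω | Y ω ≤ X ω} = ENNReal.ofReal ((1 / 2) * (a / b)) := by
  rw [measure_le_of_indepFun_uniformIcc ha hb hX hY hXY, integral_min_of_le ha.le hab]
  congr 1
  field_simp

end

theorem stmt_3_general {Ω : Type*} [MeasurableSpace Ω] (μ : Measure Ω) [IsProbabilityMeasure μ]
    (k m : ℕ) (hkm : k < m)
    (Ck Cm : ℝ) (hCk : 0 < Ck) (hCm : 0 < Cm)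
    (hstar : ℝ) (hdef : hstar = (Ck / Cm) ^ ((1 : ℝ) / ((m : ℝ) - (k : ℝ))))
    (h : ℝ) (hpos : 0 < h)
    (X Y : Ω → ℝ)
    (hX : Measure.map X μ =
      (ENNReal.ofReal (Ck * h ^ k))⁻¹ • volume.restrict (Set.Icc (0 : ℝ) (Ck * h ^ k)))
    (hY : Measure.map Y μ =
      (ENNReal.ofReal (Cm * h ^ m))⁻¹ • volume.restrict (Set.Icc (0 : ℝ) (Cm * h ^ m)))
    (hindep : IndepFun X Y μ) :
    (h ≤ hstar →
      μ {ω | Y ω ≤ X ω} = ENNReal.ofReal (1 - (1 / 2) * (h / hstar) ^ (m - k))) ∧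
    (hstar ≤ h →
      μ {ω | Y ω ≤ X ω} = ENNReal.ofReal ((1 / 2) * (hstar / h) ^ (m - k))) := by
  have hd : m - k ≠ 0 := Nat.sub_ne_zero_of_lt hkm
  have hstar_pos : 0 < hstar := hdef ▸ Real.rpow_pos_of_pos (div_pos hCk hCm) _
  have hstar_pow : hstar ^ (m - k) = Ck / Cm := by
    rw [hdef, one_div, ← Nat.cast_sub hkm.le, Real.rpow_inv_natCast_pow (div_pos hCk hCm).le hd]
  set a := Ck * h ^ k with ha_def
  set b := Cm * h ^ m with hb_def
  have ha : 0 < a := by positivity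
  have hb : 0 < b := by positivity
  have hba : b / a = (h / hstar) ^ (m - k) := by
    have hm : h ^ m = h ^ k * h ^ (m - k) := by rw [← pow_add, Nat.add_sub_cancel' hkm.le]
    rw [div_pow, hstar_pow, ha_def, hb_def, hm]
    field_simp
  constructor
  · intro hle
    have hba_le : b ≤ a := by
      rw [← div_le_one ha, hba]
      exact pow_le_one₀ (by positivity) ((div_le_one hstar_pos).2 hle)
    rw [measure_le_of_indepFun_uniformIcc_of_ge ha hb hba_le hX hY hindep, hba]
  · intro hle
    have hab : a / b = (hstar / h) ^ (m - k) := by rw [← inv_div, hba, ← inv_pow, inv_div]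
    have hab_le : a ≤ b := by
      rw [← div_le_one hb, hab]
      exact pow_le_one₀ (by positivity) ((div_le_one hpos).2 hle)
    rw [measure_le_of_indepFun_uniformIcc_of_le ha hb hab_le hX hY hindep, hab]

theorem stmt_3 {Ω : Type*} [MeasurableSpace Ω] (μ : Measure Ω) [IsProbabilityMeasure μ]
    (k m : ℕ) (hk : 0 < k) (hkm : k < m)
    (Ck Cm : ℝ) (hCk : 0 < Ck) (hCm : 0 < Cm)
    (hstar : ℝ) (hdef : hstar = (Ck / Cm) ^ ((1 : ℝ) / ((m : ℝ) - (k : ℝ))))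
    (h : ℝ) (hpos : 0 < h)
    (X Y : Ω → ℝ)
    (hX : Measure.map X μ =
      (ENNReal.ofReal (Ck * h ^ k))⁻¹ • volume.restrict (Set.Icc (0 : ℝ) (Ck * h ^ k)))
    (hY : Measure.map Y μ =
      (ENNReal.ofReal (Cm * h ^ m))⁻¹ • volume.restrict (Set.Icc (0 : ℝ) (Cm * h ^ m)))
    (hindep : IndepFun X Y μ) :
    (h ≤ hstar →
      μ {ω | Y ω ≤ X ω} = ENNReal.ofReal (1 - (1 / 2) * (h / hstar) ^ (m - k))) ∧
    (hstar ≤ h →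
      μ {ω | Y ω ≤ X ω} = ENNReal.ofReal ((1 / 2) * (hstar / h) ^ (m - k))) :=
  stmt_3_general μ k m hkm Ck Cm hCk hCm hstar hdef h hpos X Y hX hY hindep
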